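/- For every k ≥ 0, ‖β^(k)·s^(k)‖ ≤ β_max·(1 + r_β)·‖s̃^(k)‖ + (β_max/‖β̄^(k)‖₂)·‖mean(β^(k)·s^(k))‖. -/
import Mathlib


open scoped BigOperators
open Filter

noncomputable section

/-- Row-space: each agent holds a vector in ℝⁿ (Euclidean). -/
abbrev Vec (n : ℕ) := EuclideanSpace ℝ (Fin n)

/-- A "matrix" in ℝ^{N×n}, represented row-wise. -/
abbrev Mat (N n : ℕ) := Fin N → Vec n

/-- Row-mean operator `B ↦ J·B` with `J = (1/N)·11ᵀ`. -/
def meanM {N n : ℕ} (B : Mat N n) : Mat N n := fun _ => (N : ℝ)⁻¹ • ∑ i, B i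

/-- Consensus violation `B̃ = B − B̄`. -/
def tilde {N n : ℕ} (B : Mat N n) : Mat N n := B - meanM B

/-- Frobenius norm of a row-wise matrix. -/
def fnorm {N n : ℕ} (B : Mat N n) : ℝ := Real.sqrt (∑ i, ‖B i‖ ^ 2)

/-- Spectral norm (ℓ₂ operator norm) of a square matrix. -/
def specNorm {N : ℕ} (A : Matrix (Fin N) (Fin N) ℝ) : ℝ :=
  ‖LinearMap.toContinuousLinearMap (Matrix.toEuclideanLin A)‖

/-- Action of an N×N matrix on a row-wise N×n matrix. -/
def Wact {N n : ℕ} (W : Matrix (Fin N) (Fin N) ℝ) (B : Mat N n) : Mat N n :=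
  fun i => ∑ j, W i j • B j

/-- Action of a diagonal matrix `diag a` on a row-wise matrix. -/
def dAct {N n : ℕ} (a : Fin N → ℝ) (B : Mat N n) : Mat N n := fun i => a i • B i

/-- The matrix of row-wise gradients: i-th row is `∇f_i(x_i)ᵀ`. -/
def gRow {N n : ℕ} (f : Fin N → Vec n → ℝ) (x : Mat N n) : Mat N n :=
  fun i => gradient (f i) (x i)

/-- The all-(1/N) matrix `J = (1/N)·11ᵀ`. -/
def Jmat (N : ℕ) : Matrix (Fin N) (Fin N) ℝ := Matrix.of fun _ _ => (N : ℝ)⁻¹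

/-- Double stochasticity of `W`. -/
def DoublyStochastic {N : ℕ} (W : Matrix (Fin N) (Fin N) ℝ) : Prop :=
  (∀ i, ∑ j, W i j = 1) ∧ (∀ j, ∑ i, W i j = 1)

section aux

variable {N n : ℕ}

lemma fnorm_eq_norm (B : Mat N n) :
    fnorm B = ‖(WithLp.equiv 2 (Fin N → Vec n)).symm B‖ := by
  rw [fnorm, PiLp.norm_eq_of_L2]
  rfl

lemma fnorm_nonneg (B : Mat N n) : 0 ≤ fnorm B := Real.sqrt_nonneg _

lemma fnorm_sub_le (X Y : Mat N n) : fnorm (X - Y) ≤ fnorm X + fnorm Y := by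
  rw [fnorm_eq_norm, fnorm_eq_norm, fnorm_eq_norm]
  exact norm_sub_le _ _

lemma fnorm_add_le (X Y : Mat N n) : fnorm (X + Y) ≤ fnorm X + fnorm Y := by
  rw [fnorm_eq_norm, fnorm_eq_norm, fnorm_eq_norm]
  exact norm_add_le _ _

lemma fnorm_dAct_le (a : Fin N → ℝ) (C : ℝ) (hC : 0 ≤ C) (h : ∀ i, |a i| ≤ C)
    (B : Mat N n) : fnorm (dAct a B) ≤ C * fnorm B := by
  rw [fnorm, fnorm, ← Real.sqrt_sq hC, ← Real.sqrt_mul (by positivity)]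
  apply Real.sqrt_le_sqrt
  rw [Finset.mul_sum]
  apply Finset.sum_le_sum
  intro i _
  have h1 : ‖a i • B i‖ ≤ C * ‖B i‖ := by
    rw [norm_smul, Real.norm_eq_abs]
    exact mul_le_mul_of_nonneg_right (h i) (norm_nonneg _)
  calc ‖dAct a B i‖ ^ 2 ≤ (C * ‖B i‖) ^ 2 := pow_le_pow_left₀ (norm_nonneg _) h1 2
    _ = C ^ 2 * ‖B i‖ ^ 2 := by ring

lemma fnorm_smul (c : ℝ) (X : Mat N n) : fnorm (fun i => c • X i) = |c| * fnorm X := by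
  rw [fnorm, fnorm]
  simp_rw [norm_smul, Real.norm_eq_abs, mul_pow]
  rw [← Finset.mul_sum, Real.sqrt_mul (sq_nonneg _), Real.sqrt_sq_eq_abs, abs_abs]

lemma fnorm_meanM_le (B : Mat N n) : fnorm (meanM B) ≤ fnorm B := by
  rcases Nat.eq_zero_or_pos N with h0 | hpos
  · subst h0; simp [fnorm, meanM]
  have hNpos : (0:ℝ) < N := by exact_mod_cast hpos
  apply Real.sqrt_le_sqrt
  have h1 : ‖∑ j, B j‖ ≤ ∑ j, ‖B j‖ := norm_sum_le _ _
  have h2 : (∑ j, ‖B j‖) ^ 2 ≤ (N : ℝ) * ∑ j, ‖B j‖ ^ 2 := by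
    have := sq_sum_le_card_mul_sum_sq (s := (Finset.univ : Finset (Fin N)))
      (f := fun j => ‖B j‖)
    simpa using this
  have h3 : ‖∑ j, B j‖ ^ 2 ≤ (N : ℝ) * ∑ j, ‖B j‖ ^ 2 :=
    le_trans (pow_le_pow_left₀ (norm_nonneg _) h1 2) h2
  have hNne : (N:ℝ) ≠ 0 := ne_of_gt hNpos
  calc ∑ _i : Fin N, ‖meanM B _i‖ ^ 2
      = (N : ℝ) * (((N:ℝ)⁻¹) ^ 2 * ‖∑ j, B j‖ ^ 2) := by
        simp only [meanM, norm_smul, mul_pow, Finset.sum_const, Finset.card_univ,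
          Fintype.card_fin, nsmul_eq_mul, Real.norm_eq_abs,
          abs_of_nonneg (le_of_lt (inv_pos.mpr hNpos))]
    _ ≤ (N : ℝ) * (((N:ℝ)⁻¹) ^ 2 * ((N : ℝ) * ∑ j, ‖B j‖ ^ 2)) := by
        gcongr
    _ = ∑ j, ‖B j‖ ^ 2 := by field_simp

lemma diag_entry_le_specNorm (a : Fin N → ℝ) (i : Fin N) (ha : 0 ≤ a i) :
    a i ≤ specNorm (Matrix.diagonal a) := by
  have h := (LinearMap.toContinuousLinearMap
    (Matrix.toEuclideanLin (Matrix.diagonal a))).le_opNorm (EuclideanSpace.single i 1)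
  have happ : Matrix.toEuclideanLin (Matrix.diagonal a) (EuclideanSpace.single i (1:ℝ))
      = EuclideanSpace.single i (a i) := by
    ext j
    rw [Matrix.toEuclideanLin_apply]
    show Matrix.mulVec (Matrix.diagonal a) (fun j => EuclideanSpace.single i (1:ℝ) j) j
        = EuclideanSpace.single i (a i) j
    rw [Matrix.mulVec_diagonal]
    rcases eq_or_ne j i with rfl | hji
    · simp
    · simp [EuclideanSpace.single_apply, hji, Ne.symm hji]
  have hs1 : ‖EuclideanSpace.single i (1:ℝ)‖ = 1 := by
    simp [EuclideanSpace.norm_single]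
  have hs2 : ‖EuclideanSpace.single i (a i)‖ = a i := by
    simp [EuclideanSpace.norm_single, abs_of_nonneg ha]
  simp only [LinearMap.coe_toContinuousLinearMap'] at h
  rw [happ, hs1, hs2, mul_one] at h
  unfold specNorm
  exact h

end aux

section decomp

variable {N n : ℕ}

lemma decompM (b : Fin N → ℝ) (B : Mat N n) :
    dAct b B = dAct b (tilde B) + dAct b (meanM B) := by
  funext i
  simp only [dAct, tilde, Pi.add_apply, Pi.sub_apply, ← smul_add]
  rw [sub_add_cancel]

lemma mean_decomp (b : Fin N → ℝ) (B : Mat N n) :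
    (fun i => (((N:ℝ)⁻¹ * ∑ j, b j)) • meanM B i) =
      meanM (dAct b B) - meanM (dAct b (tilde B)) := by
  funext i
  simp only [meanM, dAct, tilde, Pi.sub_apply]
  rw [← smul_sub, ← Finset.sum_sub_distrib]
  simp_rw [smul_sub, sub_sub_cancel]
  rw [← Finset.sum_smul]
  module

end decomp

/-- `‖β^(k)s^(k)‖ ≤ β_max(1+r_β)‖s̃^(k)‖ + (β_max/‖β̄^(k)‖₂)‖mean(β^(k)s^(k))‖`, where
`‖β̄^(k)‖₂` equals the nonnegative scalar `(1/N)Σᵢ βᵢ^(k)`. -/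
theorem stmt7 (N n : ℕ) (hN : 1 ≤ N) (hn : 1 ≤ n)
    (β : ℕ → Fin N → ℝ) (hβ : ∀ k i, 0 ≤ β k i)
    (hβbar : ∀ k, 0 < (N : ℝ)⁻¹ * ∑ i, β k i)
    (βmax rβ : ℝ)
    (hβmax : ∀ k, specNorm (Matrix.diagonal (β k)) ≤ βmax)
    (hrβ : ∀ k, βmax / ((N : ℝ)⁻¹ * ∑ i, β k i) ≤ rβ)
    (s : ℕ → Mat N n) :
    ∀ k, fnorm (dAct (β k) (s k)) ≤
      βmax * (1 + rβ) * fnorm (tilde (s k))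
        + (βmax / ((N : ℝ)⁻¹ * ∑ i, β k i)) * fnorm (meanM (dAct (β k) (s k))) := by
  intro k
  set b := β k with hb
  set bbar := (N:ℝ)⁻¹ * ∑ i, b i with hbb
  have hbbpos : 0 < bbar := hβbar k
  have habs : ∀ i, |b i| ≤ βmax := fun i => by
    rw [abs_of_nonneg (hβ k i)]
    exact le_trans (diag_entry_le_specNorm b i (hβ k i)) (hβmax k)
  have hβmax0 : 0 ≤ βmax := le_trans (abs_nonneg _) (habs ⟨0, hN⟩)
  set A := fnorm (tilde (s k)) with hA
  set M := fnorm (meanM (dAct b (s k))) with hM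
  have hA0 : 0 ≤ A := fnorm_nonneg _
  have step2 : fnorm (dAct b (tilde (s k))) ≤ βmax * A :=
    fnorm_dAct_le b βmax hβmax0 habs _
  have step3 : fnorm (dAct b (meanM (s k))) ≤ βmax * fnorm (meanM (s k)) :=
    fnorm_dAct_le b βmax hβmax0 habs _
  have step1 : fnorm (dAct b (s k)) ≤ βmax * A + βmax * fnorm (meanM (s k)) := by
    calc fnorm (dAct b (s k))
        = fnorm (dAct b (tilde (s k)) + dAct b (meanM (s k))) := by rw [← decompM]
      _ ≤ fnorm (dAct b (tilde (s k))) + fnorm (dAct b (meanM (s k))) := fnorm_add_le _ _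
      _ ≤ βmax * A + βmax * fnorm (meanM (s k)) := add_le_add step2 step3
  have step4 : bbar * fnorm (meanM (s k)) ≤ M + βmax * A := by
    have e1 : bbar * fnorm (meanM (s k)) = fnorm (fun i => bbar • meanM (s k) i) := by
      rw [fnorm_smul, abs_of_pos hbbpos]
    rw [e1, hbb, mean_decomp b (s k)]
    refine le_trans (fnorm_sub_le _ _) ?_
    exact add_le_add le_rfl (le_trans (fnorm_meanM_le _) step2)
  have hmm : fnorm (meanM (s k)) ≤ (M + βmax * A) / bbar := by
    rw [le_div_iff₀ hbbpos]
    linarith [step4]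
  have final : fnorm (dAct b (s k)) ≤ βmax * A + βmax * ((M + βmax * A) / bbar) := by
    refine le_trans step1 ?_
    have := mul_le_mul_of_nonneg_left hmm hβmax0
    linarith
  set q := βmax / bbar with hq
  have hq0 : 0 ≤ q := div_nonneg hβmax0 hbbpos.le
  have hqr : q ≤ rβ := hrβ k
  have hrw : βmax * ((M + βmax * A) / bbar) = q * M + (q * βmax) * A := by
    rw [hq]
    field_simp
  have hlast : (q * βmax) * A ≤ (rβ * βmax) * A :=
    mul_le_mul_of_nonneg_right (mul_le_mul_of_nonneg_right hqr hβmax0) hA0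
  calc fnorm (dAct b (s k)) ≤ βmax * A + (q * M + (q * βmax) * A) := by
        rw [← hrw]; exact final
    _ ≤ βmax * A + (q * M + (rβ * βmax) * A) := by linarith
    _ = βmax * (1 + rβ) * A + q * M := by ring
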